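/- Let K(x) = −∑_{n∈V} ⟨x_n, y_n⟩ + λ ∑_{(n,m)∈E} ‖x_n − x_m‖₁ for signals x = (x_n)_{n∈V} with values in ℝ^d, where λ > 0 and y_n ∈ ℝ^d are fixed. If x* ∈ (C_d)^N minimizes K over (C_d)^N, then for almost every η ∈ C_d the thresholded signal X_η(x*) ∈ (B_d)^N minimizes K over (B_d)^N. -/

import Mathlib

open MeasureTheory

/-- Coordinatewise thresholding map: `(X_η x)_i = 1` if `x i > η i`, else `-1`. -/
noncomputable def thresh {d : ℕ} (η x : Fin d → ℝ) : Fin d → ℝ :=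
  fun i => if η i < x i then 1 else -1

section Aux
open Set

lemma indicator_cube_prod {d : ℕ} (i : Fin d) (g : ℝ → ℝ) (η : Fin d → ℝ) :
    (Icc (-1 : Fin d → ℝ) 1).indicator (fun η => g (η i)) η
      = ∏ j, (Icc (-1:ℝ) 1).indicator (fun s => if j = i then g s else 1) (η j) := by
  have hmem : η ∈ Icc (-1 : Fin d → ℝ) 1 ↔ ∀ j, η j ∈ Icc (-1:ℝ) 1 := by
    simp [Set.mem_Icc, Pi.le_def, forall_and]
  by_cases hη : η ∈ Icc (-1 : Fin d → ℝ) 1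
  · rw [Set.indicator_of_mem hη]
    have : ∀ j, (Icc (-1:ℝ) 1).indicator (fun s => if j = i then g s else 1) (η j)
        = if j = i then g (η j) else 1 := fun j =>
      Set.indicator_of_mem (hmem.1 hη j) _
    simp only [this]
    simp [Finset.prod_ite_eq']
  · rw [Set.indicator_of_notMem hη]
    obtain ⟨j, hj⟩ := not_forall.1 (fun h => hη (hmem.2 h))
    exact (Finset.prod_eq_zero (Finset.mem_univ j)
      (Set.indicator_of_notMem hj _)).symm

lemma integral_coord {d : ℕ} (hd : 1 ≤ d) (i : Fin d) (g : ℝ → ℝ) :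
    ∫ η in Icc (-1 : Fin d → ℝ) 1, g (η i)
      = 2 ^ (d - 1) * ∫ t in Icc (-1:ℝ) 1, g t := by
  rw [← integral_indicator measurableSet_Icc]
  calc ∫ η, (Icc (-1 : Fin d → ℝ) 1).indicator (fun η => g (η i)) η
      = ∫ η : Fin d → ℝ, ∏ j, (Icc (-1:ℝ) 1).indicator
          (fun s => if j = i then g s else 1) (η j) := by
        congr 1; funext η; exact indicator_cube_prod i g η
    _ = ∏ j, ∫ t : ℝ, (Icc (-1:ℝ) 1).indicator (fun s => if j = i then g s else 1) t :=
        MeasureTheory.integral_fintype_prod_eq_prod _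
    _ = ∏ j : Fin d, if j = i then (∫ t in Icc (-1:ℝ) 1, g t) else 2 := by
        refine Finset.prod_congr rfl fun j _ => ?_
        rw [integral_indicator measurableSet_Icc]
        by_cases h : j = i
        · simp [h]
        · simp [h, Real.volume_Icc]
          norm_num
    _ = 2 ^ (d - 1) * ∫ t in Icc (-1:ℝ) 1, g t := by
        rw [Finset.prod_eq_mul_prod_sdiff_singleton_of_mem (Finset.mem_univ i)]
        rw [if_pos rfl]
        rw [Finset.prod_congr rfl (fun j hj =>
          if_neg (by simpa using (Finset.mem_sdiff.1 hj).2)), Finset.prod_const,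
          Finset.card_sdiff_of_subset (Finset.subset_univ _), Finset.card_univ,
          Fintype.card_fin, Finset.card_singleton, mul_comm]

lemma int_T {c : ℝ} (hc : c ∈ Icc (-1:ℝ) 1) :
    ∫ t in Icc (-1:ℝ) 1, (if t < c then (1:ℝ) else -1) = 2 * c := by
  have h1 : (fun t : ℝ => if t < c then (1:ℝ) else -1)
      = fun t => (Iio c).indicator (fun _ => (2:ℝ)) t + (-1) := by
    funext t
    by_cases h : t < c <;> simp [Set.indicator, h] <;> norm_num
  rw [h1]
  haveI : IsFiniteMeasure (volume.restrict (Icc (-1:ℝ) 1)) :=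
    ⟨by rw [Measure.restrict_apply_univ]; exact measure_Icc_lt_top⟩
  rw [integral_add ((integrable_const (2:ℝ)).indicator measurableSet_Iio)
    (integrable_const (-1))]
  rw [integral_indicator measurableSet_Iio, Measure.restrict_restrict measurableSet_Iio]
  have h2 : Iio c ∩ Icc (-1:ℝ) 1 = Ico (-1) c := by
    ext t
    simp only [Set.mem_inter_iff, Set.mem_Iio, Set.mem_Icc, Set.mem_Ico]
    constructor
    · rintro ⟨h1, h2, h3⟩; exact ⟨h2, h1⟩
    · rintro ⟨h1, h2⟩; exact ⟨h2, h1, le_trans h2.le hc.2⟩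
  rw [h2, setIntegral_const, integral_const, measureReal_restrict_apply_univ, measureReal_def, measureReal_def, Real.volume_Ico,
    Real.volume_Icc, smul_eq_mul, smul_eq_mul,
    ENNReal.toReal_ofReal (by linarith [hc.1] : (0:ℝ) ≤ c - -1),
    ENNReal.toReal_ofReal (by norm_num : (0:ℝ) ≤ 1 - -1)]
  ring

lemma int_absT {a b : ℝ} (ha : a ∈ Icc (-1:ℝ) 1) (hb : b ∈ Icc (-1:ℝ) 1) :
    ∫ t in Icc (-1:ℝ) 1,
      |(if t < a then (1:ℝ) else -1) - (if t < b then (1:ℝ) else -1)| = 2 * |a - b| := by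
  have h1 : (fun t : ℝ => |(if t < a then (1:ℝ) else -1) - (if t < b then (1:ℝ) else -1)|)
      = fun t => (Ico (min a b) (max a b)).indicator (fun _ => (2:ℝ)) t := by
    funext t
    by_cases hA : t < a <;> by_cases hB : t < b <;>
      simp only [hA, hB, if_true, if_false, Set.indicator, Set.mem_Ico]
    · rw [if_neg]; · norm_num
      rintro ⟨h1, -⟩; exact absurd (lt_min hA hB) (not_lt.2 h1)
    · rw [if_pos ⟨(min_le_right a b).trans (not_lt.1 hB), hA.trans_le (le_max_left a b)⟩]
      norm_num
    · rw [if_pos ⟨(min_le_left a b).trans (not_lt.1 hA), hB.trans_le (le_max_right a b)⟩]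
      norm_num
    · rw [if_neg]; · norm_num
      rintro ⟨-, h2⟩; exact absurd h2 (not_lt.2 (max_le (not_lt.1 hA) (not_lt.1 hB)))
  rw [h1, integral_indicator measurableSet_Ico, Measure.restrict_restrict measurableSet_Ico]
  have h2 : Ico (min a b) (max a b) ∩ Icc (-1:ℝ) 1 = Ico (min a b) (max a b) := by
    refine Set.inter_eq_self_of_subset_left fun t ht => ⟨(le_min ha.1 hb.1).trans ht.1,
      ht.2.le.trans (max_le ha.2 hb.2)⟩
  rw [h2, setIntegral_const, measureReal_def, Real.volume_Ico, smul_eq_mul,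
    ENNReal.toReal_ofReal (by simp [sub_nonneg, min_le_max]), max_sub_min_eq_abs, mul_comm, abs_sub_comm]

end Aux

open Set in
/-- Tightness of the convexified multi-binary TV model: if `x*` minimizes
`K(x) = −∑_n ⟨x_n, y_n⟩ + λ ∑_{(n,m)∈E} ‖x_n − x_m‖₁` over the cube `(C_d)^N`,
then for almost every `η ∈ C_d` the thresholded signal `X_η(x*)` minimizes `K`
over the binary set `(B_d)^N`. -/
theorem tightness_tv_multibinary {d N : ℕ} (hd : 1 ≤ d)
    (E : Finset (Fin N × Fin N)) (y : Fin N → Fin d → ℝ) (lam : ℝ) (hlam : 0 < lam)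
    (K : (Fin N → Fin d → ℝ) → ℝ)
    (hK : K = fun x =>
      (-∑ n, ∑ i, x n i * y n i) +
        lam * ∑ e ∈ E, ∑ i, |x e.1 i - x e.2 i|)
    (C : Set (Fin N → Fin d → ℝ)) (hC : C = {x | ∀ n, x n ∈ Set.Icc (-1 : Fin d → ℝ) 1})
    (B : Set (Fin N → Fin d → ℝ)) (hB : B = {x | ∀ n i, x n i = 1 ∨ x n i = -1})
    (xstar : Fin N → Fin d → ℝ) (hxC : xstar ∈ C) (hmin : IsMinOn K C xstar) :
    ∀ᵐ η ∂(volume.restrict (Set.Icc (-1 : Fin d → ℝ) 1)),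
      (fun n => thresh η (xstar n)) ∈ B ∧
        IsMinOn K B (fun n => thresh η (xstar n)) := by
  set μ : Measure (Fin d → ℝ) := volume.restrict (Set.Icc (-1 : Fin d → ℝ) 1) with hμ
  haveI : IsFiniteMeasure μ :=
    ⟨by rw [hμ, Measure.restrict_apply_univ]; exact measure_Icc_lt_top⟩
  -- coordinates of xstar are in [-1,1]
  have hx : ∀ n i, xstar n i ∈ Icc (-1:ℝ) 1 := by
    intro n i
    have h : xstar n ∈ Icc (-1 : Fin d → ℝ) 1 := by rw [hC] at hxC; exact hxC n
    exact ⟨h.1 i, h.2 i⟩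
  -- B ⊆ C
  have hBC : B ⊆ C := by
    rw [hB, hC]
    intro b hb n
    constructor <;> intro i <;> rcases hb n i with h | h <;> simp [h]
  -- thresholded signals are in B
  have hXB : ∀ η : Fin d → ℝ, (fun n => thresh η (xstar n)) ∈ B := by
    intro η
    rw [hB]
    intro n i
    by_cases h : η i < xstar n i <;> simp [thresh, h]
  -- K xstar is a lower bound at all thresholded signals
  have hlow : ∀ η : Fin d → ℝ, K xstar ≤ K (fun n => thresh η (xstar n)) :=
    fun η => isMinOn_iff.1 hmin _ (hBC (hXB η))
  -- explicit form of K on thresholded signals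
  set G : (Fin d → ℝ) → ℝ := fun η =>
    (-∑ n, ∑ i, (if η i < xstar n i then (1:ℝ) else -1) * y n i) +
      lam * ∑ e ∈ E, ∑ i,
        |(if η i < xstar e.1 i then (1:ℝ) else -1) -
          (if η i < xstar e.2 i then (1:ℝ) else -1)| with hG
  have hGK : ∀ η, K (fun n => thresh η (xstar n)) = G η := by
    intro η; rw [hK, hG]; simp only [thresh]
  -- measurability of 1D pieces
  have hTm : ∀ c : ℝ, Measurable fun t : ℝ => if t < c then (1:ℝ) else -1 :=
    fun c => Measurable.ite measurableSet_Iio measurable_const measurable_const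
  -- integrability of building blocks
  have hint1 : ∀ (n : Fin N) (i : Fin d),
      Integrable (fun η : Fin d → ℝ =>
        (if η i < xstar n i then (1:ℝ) else -1) * y n i) μ := by
    intro n i
    refine Integrable.mono' (integrable_const (|y n i|))
      (((hTm _).comp (measurable_pi_apply i)).mul measurable_const).aestronglyMeasurable
      (Filter.Eventually.of_forall fun η => ?_)
    rw [Real.norm_eq_abs, abs_mul]
    by_cases h : η i < xstar n i <;> simp [h]
  have hint2 : ∀ (e : Fin N × Fin N) (i : Fin d),
      Integrable (fun η : Fin d → ℝ =>
        |(if η i < xstar e.1 i then (1:ℝ) else -1) -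
          (if η i < xstar e.2 i then (1:ℝ) else -1)|) μ := by
    intro e i
    refine Integrable.mono' (integrable_const (2:ℝ))
      ((((hTm _).comp (measurable_pi_apply i)).sub
        ((hTm _).comp (measurable_pi_apply i))).abs).aestronglyMeasurable
      (Filter.Eventually.of_forall fun η => ?_)
    rw [Real.norm_eq_abs, abs_abs]
    by_cases h1 : η i < xstar e.1 i <;> by_cases h2 : η i < xstar e.2 i <;>
      simp [h1, h2] <;> norm_num
  have hS1int : Integrable (fun η : Fin d → ℝ =>
      ∑ n, ∑ i, (if η i < xstar n i then (1:ℝ) else -1) * y n i) μ :=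
    integrable_finset_sum _ fun n _ => integrable_finset_sum _ fun i _ => hint1 n i
  have hS2int : Integrable (fun η : Fin d → ℝ =>
      ∑ e ∈ E, ∑ i,
        |(if η i < xstar e.1 i then (1:ℝ) else -1) -
          (if η i < xstar e.2 i then (1:ℝ) else -1)|) μ :=
    integrable_finset_sum _ fun e _ => integrable_finset_sum _ fun i _ => hint2 e i
  have hGint : Integrable G μ := by
    rw [hG]; exact (hS1int.neg').add (hS2int.const_mul lam)
  -- the power identity
  have hpow : (2:ℝ) ^ (d - 1) * 2 = 2 ^ d := by
    rw [← pow_succ]; congr 1; omega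
  -- integral of G
  have hIG : ∫ η, G η ∂μ = 2 ^ d * K xstar := by
    rw [hG]
    rw [integral_add hS1int.neg' (hS2int.const_mul lam)]
    rw [integral_neg, integral_const_mul]
    rw [integral_finset_sum _ fun n _ => integrable_finset_sum _ fun i _ => hint1 n i]
    rw [integral_finset_sum _ fun e _ => integrable_finset_sum _ fun i _ => hint2 e i]
    have e1 : ∀ (n : Fin N), ∫ η, (∑ i, (if η i < xstar n i then (1:ℝ) else -1) * y n i) ∂μ
        = ∑ i, 2 ^ d * (xstar n i * y n i) := by
      intro n
      rw [integral_finset_sum _ fun i _ => hint1 n i]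
      refine Finset.sum_congr rfl fun i _ => ?_
      have := integral_coord hd i (fun t => (if t < xstar n i then (1:ℝ) else -1) * y n i)
      rw [hμ, this, integral_mul_const, int_T (hx n i)]
      rw [← hpow]; ring
    have e2 : ∀ (e : Fin N × Fin N), ∫ η, (∑ i,
        |(if η i < xstar e.1 i then (1:ℝ) else -1) -
          (if η i < xstar e.2 i then (1:ℝ) else -1)|) ∂μ
        = ∑ i, 2 ^ d * |xstar e.1 i - xstar e.2 i| := by
      intro e
      rw [integral_finset_sum _ fun i _ => hint2 e i]
      refine Finset.sum_congr rfl fun i _ => ?_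
      have := integral_coord hd i (fun t =>
        |(if t < xstar e.1 i then (1:ℝ) else -1) - (if t < xstar e.2 i then (1:ℝ) else -1)|)
      rw [hμ, this, int_absT (hx e.1 i) (hx e.2 i)]
      rw [← hpow]; ring
    simp only [e1, e2]
    rw [hK]
    simp only [← Finset.mul_sum]
    ring
  -- integral of the constant K xstar
  have hIC : ∫ _η, K xstar ∂μ = 2 ^ d * K xstar := by
    have := integral_coord (d := d) hd ⟨0, hd⟩ (fun _ => K xstar)
    rw [hμ, this, setIntegral_const, measureReal_def, Real.volume_Icc, smul_eq_mul,
      ENNReal.toReal_ofReal (by norm_num : (0:ℝ) ≤ 1 - -1)]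
    rw [← hpow]; ring
  -- the nonnegative defect integrates to zero
  have hzero : ∫ η, (G η - K xstar) ∂μ = 0 := by
    rw [integral_sub hGint (integrable_const _), hIG, hIC, sub_self]
  have hae : (fun η => G η - K xstar) =ᵐ[μ] 0 := by
    refine (integral_eq_zero_iff_of_nonneg (fun η => ?_) (hGint.sub (integrable_const _))).1
      hzero
    have := hlow η
    rw [hGK η] at this
    simpa [sub_nonneg] using this
  filter_upwards [hae] with η hη
  have hKeq : K (fun n => thresh η (xstar n)) = K xstar := by
    rw [hGK η]
    have : G η - K xstar = 0 := hη
    linarith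
  refine ⟨hXB η, isMinOn_iff.2 fun b hb => ?_⟩
  rw [hKeq]
  exact isMinOn_iff.1 hmin b (hBC hb)
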